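/- arXiv:0901.3090 — 2 statements merged into one kernel-verified Lean document; each statement's English description precedes it below -/
import Mathlib

section
/- Let k be a field, p a prime, 0 ≤ h, and d an integer with p^h < d < p^{h+1}. Write E_j = k[X]/(X^j). Then the sequence 0 → E_{p^h+p^{h+1}−d} → E_{p^h} × E_{p^{h+1}} → E_d → 0 is a short exact sequence of k[X]-modules, where the first map is induced by T ↦ (−T, X^{d−p^h}·T) and the second map is e_d, induced by (Q,R) ↦ X^{d−p^h}·Q + R. That is: the first map is injective, its range equals the kernel of e_d, and e_d is surjective. -/
open Polynomial

/-- `Emod k j` is the `k[X]`-module `k[X]/(X^j)`. -/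
abbrev Emod (k : Type*) [Field k] (j : ℕ) :=
  Polynomial k ⧸ Ideal.span {(X : Polynomial k) ^ j}

/-- The `k[X]`-linear map `k[X]/(X^a) → k[X]/(X^d)` induced by multiplication
by `X^t`, well defined when `d ≤ t + a`. -/
noncomputable def shiftMap (k : Type*) [Field k] (a d t : ℕ) (hle : d ≤ t + a) :
    Emod k a →ₗ[Polynomial k] Emod k d :=
  Submodule.mapQ (Ideal.span {(X : Polynomial k) ^ a}) (Ideal.span {(X : Polynomial k) ^ d})
    (LinearMap.lsmul (Polynomial k) (Polynomial k) (X ^ t))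
    (by
      refine Submodule.span_le.2 ?_
      simp only [Set.singleton_subset_iff, SetLike.mem_coe, Submodule.mem_comap,
        LinearMap.lsmul_apply, smul_eq_mul, Ideal.submodule_span_eq, Ideal.mem_span_singleton,
        ← pow_add]
      exact pow_dvd_pow _ hle)

/-- The `k[X]`-linear map `e_d : k[X]/(X^a) × k[X]/(X^b) → k[X]/(X^d)` induced by
`(Q, R) ↦ X^(d-a)·Q + R`, for `a ≤ d ≤ b`. -/
noncomputable def eD (k : Type*) [Field k] (a b d : ℕ) (h1 : a ≤ d) (h2 : d ≤ b) :
    Emod k a × Emod k b →ₗ[Polynomial k] Emod k d :=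
  (shiftMap k a d (d - a) (by omega)).coprod (shiftMap k b d 0 (by omega))

/-- The `k[X]`-linear map `k[X]/(X^(a+b-d)) → k[X]/(X^a) × k[X]/(X^b)` induced by
`T ↦ (−T, X^(d−a)·T)`, for `a ≤ d ≤ b`. -/
noncomputable def iotaMap (k : Type*) [Field k] (a b d : ℕ) (h1 : a ≤ d) (h2 : d ≤ b) :
    Emod k (a + b - d) →ₗ[Polynomial k] Emod k a × Emod k b :=
  (-(shiftMap k (a + b - d) a 0 (by omega))).prod (shiftMap k (a + b - d) b (d - a) (by omega))


namespace Emod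

variable {k : Type*} [Field k]

lemma mk_eq_zero_iff {j : ℕ} {P : k[X]} :
    (Submodule.Quotient.mk P : Emod k j) = 0 ↔ X ^ j ∣ P := by
  rw [Submodule.Quotient.mk_eq_zero]
  exact Ideal.mem_span_singleton

end Emod

section

variable {k : Type*} [Field k] {a b d : ℕ}

lemma shiftMap_mk (t : ℕ) (hle : d ≤ t + a) (P : k[X]) :
    shiftMap k a d t hle (Submodule.Quotient.mk P) = Submodule.Quotient.mk (X ^ t * P) := by
  rw [shiftMap, Submodule.mapQ_apply, LinearMap.lsmul_apply, smul_eq_mul]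

lemma iotaMap_mk (h1 : a ≤ d) (h2 : d ≤ b) (P : k[X]) :
    iotaMap k a b d h1 h2 (Submodule.Quotient.mk P) =
      (Submodule.Quotient.mk (-P), Submodule.Quotient.mk (X ^ (d - a) * P)) := by
  simp only [iotaMap, LinearMap.prod_apply, Function.prod, LinearMap.neg_apply, shiftMap_mk,
    pow_zero, one_mul, Submodule.Quotient.mk_neg]

lemma eD_mk (h1 : a ≤ d) (h2 : d ≤ b) (Q R : k[X]) :
    eD k a b d h1 h2 (Submodule.Quotient.mk Q, Submodule.Quotient.mk R) =
      Submodule.Quotient.mk (X ^ (d - a) * Q + R) := by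
  rw [eD, LinearMap.coprod_apply, shiftMap_mk, shiftMap_mk, pow_zero, one_mul,
    Submodule.Quotient.mk_add]

lemma iotaMap_injective (h1 : a ≤ d) (h2 : d ≤ b) :
    Function.Injective (iotaMap k a b d h1 h2) := by
  rw [← LinearMap.ker_eq_bot, LinearMap.ker_eq_bot']
  intro T hT
  obtain ⟨P, rfl⟩ := Submodule.Quotient.mk_surjective _ T
  have hdvd : X ^ (d - a) * X ^ (a + b - d) ∣ X ^ (d - a) * P := by
    rw [← pow_add, show d - a + (a + b - d) = b by omega, ← Emod.mk_eq_zero_iff]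
    simpa only [iotaMap_mk, Prod.snd_zero] using congrArg Prod.snd hT
  exact Emod.mk_eq_zero_iff.mpr ((mul_dvd_mul_iff_left (pow_ne_zero _ X_ne_zero)).mp hdvd)

lemma eD_comp_iotaMap (h1 : a ≤ d) (h2 : d ≤ b) :
    eD k a b d h1 h2 ∘ₗ iotaMap k a b d h1 h2 = 0 := by
  refine LinearMap.ext fun T => ?_
  obtain ⟨P, rfl⟩ := Submodule.Quotient.mk_surjective _ T
  rw [LinearMap.comp_apply, iotaMap_mk, eD_mk, mul_neg, neg_add_cancel, Submodule.Quotient.mk_zero,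
    LinearMap.zero_apply]

lemma ker_eD_le_range_iotaMap (h1 : a ≤ d) (h2 : d ≤ b) :
    LinearMap.ker (eD k a b d h1 h2) ≤ LinearMap.range (iotaMap k a b d h1 h2) := by
  rintro ⟨q, r⟩ hqr
  obtain ⟨Q, rfl⟩ := Submodule.Quotient.mk_surjective _ q
  obtain ⟨R, rfl⟩ := Submodule.Quotient.mk_surjective _ r
  obtain ⟨S, hS⟩ := Emod.mk_eq_zero_iff.mp (by simpa only [LinearMap.mem_ker, eD_mk] using hqr)
  -- `X^(d-a) Q + R = X^d S` makes `T = X^a S - Q` a preimage of `(Q, R)`.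
  refine ⟨Submodule.Quotient.mk (X ^ a * S - Q), ?_⟩
  rw [iotaMap_mk, Prod.mk.injEq]
  constructor
  · rw [Submodule.Quotient.eq]
    exact Ideal.mem_span_singleton.mpr ⟨-S, by ring⟩
  · have hX : (X : k[X]) ^ (d - a) * X ^ a = X ^ d := by rw [← pow_add, Nat.sub_add_cancel h1]
    congr 1
    linear_combination S * hX - hS

lemma range_iotaMap_eq_ker_eD (h1 : a ≤ d) (h2 : d ≤ b) :
    LinearMap.range (iotaMap k a b d h1 h2) = LinearMap.ker (eD k a b d h1 h2) :=
  le_antisymm (LinearMap.range_le_ker_iff.mpr (eD_comp_iotaMap h1 h2))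
    (ker_eD_le_range_iotaMap h1 h2)

lemma eD_surjective (h1 : a ≤ d) (h2 : d ≤ b) : Function.Surjective (eD k a b d h1 h2) := by
  rintro ⟨R⟩
  exact ⟨(0, Submodule.Quotient.mk R), by
    rw [← Submodule.Quotient.mk_zero, eD_mk, mul_zero, zero_add]; rfl⟩

end

theorem iotaMap_eD_shortExact_general (k : Type*) [Field k] (p h d : ℕ)
    (hd1 : p ^ h < d) (hd2 : d < p ^ (h + 1)) :
    Function.Injective (iotaMap k (p ^ h) (p ^ (h + 1)) d hd1.le hd2.le) ∧
    LinearMap.range (iotaMap k (p ^ h) (p ^ (h + 1)) d hd1.le hd2.le) =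
      LinearMap.ker (eD k (p ^ h) (p ^ (h + 1)) d hd1.le hd2.le) ∧
    Function.Surjective (eD k (p ^ h) (p ^ (h + 1)) d hd1.le hd2.le) :=
  ⟨iotaMap_injective _ _, range_iotaMap_eq_ker_eD _ _, eD_surjective _ _⟩

/-- For `p^h < d < p^(h+1)` the sequence
`0 → E_{p^h + p^(h+1) − d} → E_{p^h} × E_{p^(h+1)} → E_d → 0`, with first map
`T ↦ (−T, X^(d−p^h)·T)` and second map `e_d : (Q,R) ↦ X^(d−p^h)·Q + R`, is a short
exact sequence of `k[X]`-modules. -/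
theorem iotaMap_eD_shortExact (k : Type*) [Field k] (p h d : ℕ) (hp : p.Prime)
    (hd1 : p ^ h < d) (hd2 : d < p ^ (h + 1)) :
    Function.Injective (iotaMap k (p ^ h) (p ^ (h + 1)) d hd1.le hd2.le) ∧
    LinearMap.range (iotaMap k (p ^ h) (p ^ (h + 1)) d hd1.le hd2.le) =
      LinearMap.ker (eD k (p ^ h) (p ^ (h + 1)) d hd1.le hd2.le) ∧
    Function.Surjective (eD k (p ^ h) (p ^ (h + 1)) d hd1.le hd2.le) :=
  iotaMap_eD_shortExact_general k p h d hd1 hd2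
end

section
/- With Ẽ as below, let x₁, …, x_n be elements of G∖(B∪{0}) and let i ∈ {1,…,n−1} be an index with d(x_i) ≠ d(x_{i+1}). Then the element γ_{x₁}⋯γ_{x_{i−1}}γ_{x_i}γ_{x_{i+1}}γ_{x_{i+2}}⋯γ_{x_n} + γ_{x₁}⋯γ_{x_{i−1}}γ_{x_{i+1}}γ_{x_i}γ_{x_{i+2}}⋯γ_{x_n} of Ẽ lies in the k-linear span of the monomials γ_{y₁}⋯γ_{y_n} with all y_j ∈ G∖(B∪{0}) and Σ_{j=1}^n d(y_j) > Σ_{j=1}^n d(x_j). -/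
open scoped Classical

/-- `dB b x` is the least `i` such that `x` lies in the span of the first `i`
vectors `b 0, …, b (i-1)` of the basis `b`. -/
noncomputable def dB {G : Type*} [AddCommGroup G] [Module (ZMod 2) G] {m : ℕ}
    (b : Module.Basis (Fin m) (ZMod 2) G) (x : G) : ℕ :=
  sInf {i : ℕ | x ∈ Submodule.span (ZMod 2) {y : G | ∃ j : Fin m, (j : ℕ) < i ∧ y = b j}}

/-- The defining relations of the algebra `Ẽ`: for every hyperplane `H` of `G` the
relation `∑_{x ∉ H} γ_x = 0`, and for all distinct nonzero `x`, `y` the relation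
`[γ_x + γ_y, γ_{x+y}] = 0` (where `[a,b] = ab + ba`). -/
inductive ExtRel (k : Type*) [Field k] (G : Type*) [AddCommGroup G] [Module (ZMod 2) G]
    [Fintype G] :
    FreeAlgebra k {x : G // x ≠ 0} → FreeAlgebra k {x : G // x ≠ 0} → Prop
  | hyperplane (H : Submodule (ZMod 2) G)
      (hH : Module.finrank (ZMod 2) H + 1 = Module.finrank (ZMod 2) G) :
      ExtRel k G
        (∑ x ∈ Finset.univ.filter (fun x : {x : G // x ≠ 0} => (x : G) ∉ H),
          FreeAlgebra.ι k x) 0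
  | comm (x y : {x : G // x ≠ 0}) (hxy : x ≠ y) (hs : (x : G) + (y : G) ≠ 0) :
      ExtRel k G
        ((FreeAlgebra.ι k x + FreeAlgebra.ι k y) * FreeAlgebra.ι k ⟨(x : G) + y, hs⟩ +
          FreeAlgebra.ι k ⟨(x : G) + y, hs⟩ * (FreeAlgebra.ι k x + FreeAlgebra.ι k y)) 0

/-!
Let `u = x_i`, `v = x_{i+1}` with `d(u) < d(v)`; the other case follows by applying this one
to the swapped word. Then `w = u + v` has `d(w) = d(v)`, and the commutator relation for the
pair `(u, w)` reads `γ_u γ_v + γ_v γ_u = γ_w γ_v + γ_v γ_w` in characteristic 2. If `w = b_j`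
is a basis vector, the hyperplane relation for `ker b_j^*` rewrites `γ_w` as the sum of the `γ_z`
over the other `z` with nonzero `j`-th coordinate; these are not basis vectors and have
`d(z) ≥ j + 1 ≥ d(w)`. Substituting, the exchange sum becomes a sum of monomials in which `u`
is replaced by a letter of weight `≥ d(v) > d(u)`.
-/

theorem add_self_eq_zero_of_charTwo {R M : Type*} [Semiring R] [CharP R 2] [AddCommMonoid M]
    [Module R M] (a : M) : a + a = 0 := by
  rw [← two_smul R a, CharTwo.two_eq_zero, zero_smul]

theorem eq_of_add_eq_zero_of_charTwo {R M : Type*} [Semiring R] [CharP R 2] [AddCommGroup M]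
    [Module R M] {a c : M} (h : a + c = 0) : a = c := by
  rw [← neg_eq_of_add_eq_zero_right h,
    neg_eq_of_add_eq_zero_right (add_self_eq_zero_of_charTwo (R := R) a)]

theorem Finset.sum_lt_sum_update_update {ι M : Type*} [Fintype ι] [DecidableEq ι]
    [AddCommMonoid M] [PartialOrder M] [IsOrderedCancelAddMonoid M]
    (f : ι → M) {i i' : ι} (hii' : i ≠ i') {a c : M} (ha : f i < a) (hc : f i' ≤ c) :
    ∑ j, f j < ∑ j, Function.update (Function.update f i' c) i a j := by
  refine Finset.sum_lt_sum (fun j _ => ?_) ⟨i, Finset.mem_univ i, by simpa using ha⟩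
  rcases eq_or_ne j i with rfl | hji
  · simpa using ha.le
  rcases eq_or_ne j i' with rfl | hji'
  · simpa [hji] using hc
  · simp [hji, hji']

theorem List.prod_ofFn_update_update {M : Type*} [Monoid M] {n : ℕ} (f : Fin n → M)
    {i i' : Fin n} (hi' : (i' : ℕ) = i + 1) (a c : M) :
    (List.ofFn (Function.update (Function.update f i' c) i a)).prod =
      ((List.ofFn f).take i).prod * a * c * ((List.ofFn f).drop (i + 2)).prod := by
  obtain ⟨i', hlt⟩ := i'
  obtain rfl : i' = i + 1 := hi'
  set g := Function.update (Function.update f ⟨i + 1, hlt⟩ c) i a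
  have hg : ∀ j : Fin n, (j : ℕ) ≠ i → (j : ℕ) ≠ i + 1 → g j = f j := fun j h h' => by
    simp [g, Fin.ext_iff, h, h']
  have htake : (List.ofFn g).take i = (List.ofFn f).take i :=
    List.ext_getElem (by simp) fun j hj _ => by
      simp only [List.length_take, List.length_ofFn] at hj
      simp only [List.getElem_take, List.getElem_ofFn]
      exact hg _ (by simp; omega) (by simp; omega)
  have hdrop : (List.ofFn g).drop (i + 2) = (List.ofFn f).drop (i + 2) :=
    List.ext_getElem (by simp) fun j _ _ => by
      simp only [List.getElem_drop, List.getElem_ofFn]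
      exact hg _ (by simp; omega) (by simp; omega)
  rw [← List.take_append_drop i (List.ofFn g), List.prod_append,
    List.drop_eq_getElem_cons (by simp), List.drop_eq_getElem_cons (by simp; omega),
    List.prod_cons, List.prod_cons, htake, hdrop]
  simp [g, mul_assoc, Fin.ext_iff]

section Weight

variable {G : Type*} [AddCommGroup G] [Module (ZMod 2) G] {m : ℕ}
  (b : Module.Basis (Fin m) (ZMod 2) G)

noncomputable def spanBelow (i : ℕ) : Submodule (ZMod 2) G :=
  Submodule.span (ZMod 2) {y : G | ∃ j : Fin m, (j : ℕ) < i ∧ y = b j}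

theorem spanBelow_mono : Monotone (spanBelow b) := fun _ _ h =>
  Submodule.span_mono fun _ ⟨j, hj, hy⟩ => ⟨j, hj.trans_le h, hy⟩

theorem dB_eq_sInf (x : G) : dB b x = sInf {i | x ∈ spanBelow b i} := rfl

theorem mem_spanBelow_dB (x : G) : x ∈ spanBelow b (dB b x) := by
  have hm : x ∈ spanBelow b m := by
    rw [spanBelow, show {y : G | ∃ j : Fin m, (j : ℕ) < m ∧ y = b j} = Set.range b by
      ext; simp [eq_comm], b.span_eq]
    trivial
  rw [dB_eq_sInf]
  exact Nat.sInf_mem (s := {i | x ∈ spanBelow b i}) ⟨m, hm⟩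

theorem mem_spanBelow_iff_dB_le {x : G} {i : ℕ} : x ∈ spanBelow b i ↔ dB b x ≤ i :=
  ⟨fun h => dB_eq_sInf b x ▸ Nat.sInf_le h, fun h => spanBelow_mono b h (mem_spanBelow_dB b x)⟩

theorem dB_add_le_max (y z : G) : dB b (y + z) ≤ max (dB b y) (dB b z) :=
  (mem_spanBelow_iff_dB_le b).1 <| Submodule.add_mem _
    (spanBelow_mono b (le_max_left _ _) (mem_spanBelow_dB b y))
    (spanBelow_mono b (le_max_right _ _) (mem_spanBelow_dB b z))

theorem dB_add_of_lt {u v : G} (h : dB b u < dB b v) : dB b (u + v) = dB b v := by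
  refine le_antisymm ((dB_add_le_max b u v).trans (max_le h.le le_rfl)) (not_lt.1 fun hlt => ?_)
  have := dB_add_le_max b u (u + v)
  rw [← add_assoc, add_self_eq_zero_of_charTwo (R := ZMod 2), zero_add] at this
  exact this.not_gt (max_lt h hlt)

theorem spanBelow_le_ker_coord {i : ℕ} {j : Fin m} (hij : i ≤ j) :
    spanBelow b i ≤ LinearMap.ker (b.coord j) :=
  Submodule.span_le.2 fun _ ⟨l, hl, hy⟩ => by
    subst hy
    simp [Fin.ext_iff, (hl.trans_le hij).ne']

theorem dB_basis_le (j : Fin m) : dB b (b j) ≤ j + 1 :=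
  Nat.sInf_le <| Submodule.subset_span ⟨j, Nat.lt_succ_self _, rfl⟩

theorem lt_dB_of_coord_ne_zero {x : G} {j : Fin m} (h : b.coord j x ≠ 0) : (j : ℕ) < dB b x :=
  not_le.1 fun hle => h (spanBelow_le_ker_coord b le_rfl ((mem_spanBelow_iff_dB_le b).2 hle))

end Weight

section Relations

variable (k : Type*) [Field k] (G : Type*) [AddCommGroup G] [Module (ZMod 2) G] [Fintype G]

noncomputable def gamma (x : {g : G // g ≠ 0}) : RingQuot (ExtRel k G) :=
  RingQuot.mkAlgHom k (ExtRel k G) (FreeAlgebra.ι k x)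

noncomputable def monomial {n : ℕ} (y : Fin n → {g : G // g ≠ 0}) : RingQuot (ExtRel k G) :=
  (List.ofFn fun j => gamma k G (y j)).prod

variable {G}

theorem mkAlgHom_prod_ofFn_ι {n : ℕ} (y : Fin n → {g : G // g ≠ 0}) :
    RingQuot.mkAlgHom k (ExtRel k G) (List.ofFn fun j => FreeAlgebra.ι k (y j)).prod =
      monomial k G y := by
  rw [map_list_prod, List.map_ofFn]
  rfl

theorem monomial_update_update {n : ℕ} (x : Fin n → {g : G // g ≠ 0}) {i i' : Fin n}
    (hi' : (i' : ℕ) = i + 1) (a c : {g : G // g ≠ 0}) :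
    monomial k G (Function.update (Function.update x i' c) i a) =
      ((List.ofFn fun j => gamma k G (x j)).take i).prod * gamma k G a * gamma k G c *
        ((List.ofFn fun j => gamma k G (x j)).drop (i + 2)).prod := by
  rw [monomial, ← List.prod_ofFn_update_update _ hi']
  simp only [← Function.comp_def (gamma k G), Function.comp_update]

variable {m : ℕ} (b : Module.Basis (Fin m) (ZMod 2) G)

noncomputable def spanHigherWeight (n w : ℕ) : Submodule k (RingQuot (ExtRel k G)) :=
  Submodule.span k {a | ∃ y : Fin n → {g : G // g ≠ 0}, (∀ j, (y j : G) ∉ Set.range b) ∧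
    w < ∑ j, dB b (y j : G) ∧ a = monomial k G y}

theorem monomial_update_update_mem_spanHigherWeight {n : ℕ} {x : Fin n → {g : G // g ≠ 0}}
    (hx : ∀ j, (x j : G) ∉ Set.range b) {i i' : Fin n} (hii' : i ≠ i')
    {a c : {g : G // g ≠ 0}} (ha : (a : G) ∉ Set.range b) (hc : (c : G) ∉ Set.range b)
    (hda : dB b (x i : G) < dB b a) (hdc : dB b (x i' : G) ≤ dB b c) :
    monomial k G (Function.update (Function.update x i' c) i a) ∈
      spanHigherWeight k b n (∑ j, dB b (x j : G)) := by
  refine Submodule.subset_span ⟨_, fun j => ?_, ?_, rfl⟩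
  · rcases eq_or_ne j i with rfl | hji
    · simpa using ha
    rcases eq_or_ne j i' with rfl | hji'
    · simpa [hji] using hc
    · simpa [hji, hji'] using hx j
  · show ∑ j, ((dB b ∘ Subtype.val) ∘ x) j <
      ∑ j, ((dB b ∘ Subtype.val) ∘ Function.update (Function.update x i' c) i a) j
    rw [Function.comp_update, Function.comp_update]
    exact Finset.sum_lt_sum_update_update _ hii' hda hdc

variable [CharP k 2]

theorem gamma_mul_add_mul_eq (u v : {g : G // g ≠ 0}) (huv : (u : G) + v ≠ 0) :
    gamma k G u * gamma k G v + gamma k G v * gamma k G u =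
      gamma k G ⟨u + v, huv⟩ * gamma k G v + gamma k G v * gamma k G ⟨u + v, huv⟩ := by
  set w : {g : G // g ≠ 0} := ⟨u + v, huv⟩
  have huw : (u : G) + w = v := by
    rw [← add_assoc, add_self_eq_zero_of_charTwo (R := ZMod 2), zero_add]
  have hne : u ≠ w := fun h => v.2 <| by
    rw [← huw, ← h, add_self_eq_zero_of_charTwo (R := ZMod 2)]
  have hrel := RingQuot.mkAlgHom_rel k (ExtRel.comm (k := k) u w hne (huw ▸ v.2))
  rw [show (⟨u + w, huw ▸ v.2⟩ : {g : G // g ≠ 0}) = v from Subtype.ext huw, map_zero] at hrel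
  simp only [map_add, map_mul] at hrel
  refine eq_of_add_eq_zero_of_charTwo (R := k) ?_
  calc _ = (gamma k G u + gamma k G w) * gamma k G v +
        gamma k G v * (gamma k G u + gamma k G w) := by noncomm_ring
    _ = 0 := hrel

theorem gamma_basis_eq_sum (j : Fin m) :
    gamma k G ⟨b j, b.ne_zero j⟩ =
      ∑ z ∈ ({z | b.coord j z ≠ 0} : Finset {g : G // g ≠ 0}).erase ⟨b j, b.ne_zero j⟩,
        gamma k G z := by
  have hH := Module.Dual.finrank_ker_add_one_of_ne_zero (f := b.coord j) fun h => by
    simpa using LinearMap.congr_fun h (b j)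
  have hrel := RingQuot.mkAlgHom_rel k (ExtRel.hyperplane (k := k) _ hH)
  simp only [map_zero, map_sum, LinearMap.mem_ker] at hrel
  rw [← Finset.add_sum_erase _ _ (a := ⟨b j, b.ne_zero j⟩) (by simp)] at hrel
  exact eq_of_add_eq_zero_of_charTwo (R := k) hrel

theorem exists_gamma_eq_sum_notMem_range (w : {g : G // g ≠ 0}) :
    ∃ S : Finset {g : G // g ≠ 0}, (∀ z ∈ S, (z : G) ∉ Set.range b ∧ dB b w ≤ dB b z) ∧
      gamma k G w = ∑ z ∈ S, gamma k G z := by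
  by_cases hw : (w : G) ∈ Set.range b
  swap
  · exact ⟨{w}, by simpa using hw, by simp⟩
  obtain ⟨j, hj⟩ := hw
  obtain rfl : w = ⟨b j, b.ne_zero j⟩ := Subtype.ext hj.symm
  refine ⟨_, fun z hz => ?_, gamma_basis_eq_sum k b j⟩
  obtain ⟨hzj, hz⟩ := Finset.mem_erase.1 hz
  have hcoord : b.coord j z ≠ 0 := by simpa using hz
  refine ⟨?_, (dB_basis_le b j).trans (lt_dB_of_coord_ne_zero b hcoord)⟩
  rintro ⟨l, hl⟩
  have hlj : l ≠ j := fun h => hzj (Subtype.ext (h ▸ hl.symm))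
  exact hcoord (by simp [← hl, hlj])

theorem monomial_add_monomial_comp_swap_mem_span {n : ℕ} {x : Fin n → {g : G // g ≠ 0}}
    (hx : ∀ j, (x j : G) ∉ Set.range b) {i i' : Fin n} (hi' : (i' : ℕ) = i + 1)
    (hd : dB b (x i : G) < dB b (x i' : G)) :
    monomial k G x + monomial k G (x ∘ Equiv.swap i i') ∈
      spanHigherWeight k b n (∑ j, dB b (x j : G)) := by
  have hii' : i ≠ i' := Fin.ne_of_val_ne (by omega)
  have huv : (x i : G) + x i' ≠ 0 := fun h =>
    hd.ne (by rw [eq_of_add_eq_zero_of_charTwo (R := ZMod 2) h])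
  obtain ⟨S, hS, hsum⟩ := exists_gamma_eq_sum_notMem_range k b ⟨_, huv⟩
  simp only [dB_add_of_lt b hd] at hS
  set L := ((List.ofFn fun j => gamma k G (x j)).take i).prod
  set R := ((List.ofFn fun j => gamma k G (x j)).drop (i + 2)).prod
  have hmono : monomial k G x = L * gamma k G (x i) * gamma k G (x i') * R := by
    simpa only [Function.update_eq_self] using monomial_update_update k x hi' (x i) (x i')
  have hexpand : monomial k G x + monomial k G (x ∘ Equiv.swap i i') =
      ∑ z ∈ S, (monomial k G (Function.update (Function.update x i' (x i')) i z) +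
        monomial k G (Function.update (Function.update x i' z) i (x i'))) := by
    calc monomial k G x + monomial k G (x ∘ Equiv.swap i i')
        = L * (gamma k G (x i) * gamma k G (x i') + gamma k G (x i') * gamma k G (x i)) * R := by
          rw [Equiv.comp_swap_eq_update, hmono, monomial_update_update k x hi']
          noncomm_ring
      _ = ∑ z ∈ S, (L * gamma k G z * gamma k G (x i') * R +
            L * gamma k G (x i') * gamma k G z * R) := by
          simp only [gamma_mul_add_mul_eq k _ _ huv, hsum, Finset.sum_mul, Finset.mul_sum,
            ← Finset.sum_add_distrib]
          exact Finset.sum_congr rfl fun z _ => by noncomm_ring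
      _ = _ := by simp only [monomial_update_update k x hi']; rfl
  rw [hexpand]
  exact Submodule.sum_mem _ fun z hz =>
    Submodule.add_mem _
      (monomial_update_update_mem_spanHigherWeight k b hx hii' (hS z hz).1 (hx i')
        (hd.trans_le (hS z hz).2) le_rfl)
      (monomial_update_update_mem_spanHigherWeight k b hx hii' (hx i') (hS z hz).1 hd (hS z hz).2)

end Relations

/-- (Exchange lemma.) If `x₁, …, x_n ∈ G∖(B∪{0})` and
`d(x_i) ≠ d(x_{i+1})`, then in `Ẽ` the sum of the monomial `γ_{x₁}⋯γ_{x_n}` and the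
monomial obtained by exchanging the `i`-th and `(i+1)`-st factors lies in the span of
the special monomials of the same length with strictly larger total weight
`Σ_j d(y_j)`. -/
theorem exchange_mem_span_higher_weight (k : Type*) [Field k] [CharP k 2]
    (G : Type*) [AddCommGroup G] [Module (ZMod 2) G] [Fintype G]
    {m : ℕ} (b : Module.Basis (Fin m) (ZMod 2) G)
    (n : ℕ) (x : Fin n → {g : G // g ≠ 0})
    (hx : ∀ j, (x j : G) ∉ Set.range ⇑b)
    (i : Fin n) (hi : (i : ℕ) + 1 < n)
    (hd : dB b (x i : G) ≠ dB b (x ⟨(i : ℕ) + 1, hi⟩ : G)) :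
    RingQuot.mkAlgHom k (ExtRel k G) ((List.ofFn fun j => FreeAlgebra.ι k (x j)).prod) +
      RingQuot.mkAlgHom k (ExtRel k G)
        ((List.ofFn fun j =>
          FreeAlgebra.ι k (x (Equiv.swap i ⟨(i : ℕ) + 1, hi⟩ j))).prod) ∈
    Submodule.span k
      {a : RingQuot (ExtRel k G) | ∃ y : Fin n → {g : G // g ≠ 0},
        (∀ j, (y j : G) ∉ Set.range ⇑b) ∧
        (∑ j, dB b (x j : G)) < (∑ j, dB b (y j : G)) ∧
        a = RingQuot.mkAlgHom k (ExtRel k G)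
          ((List.ofFn fun j => FreeAlgebra.ι k (y j)).prod)} := by
  simp only [mkAlgHom_prod_ofFn_ι]
  generalize hi' : (⟨i + 1, hi⟩ : Fin n) = i' at hd ⊢
  replace hi' : (i' : ℕ) = i + 1 := by rw [← hi']
  change monomial k G x + monomial k G (x ∘ Equiv.swap i i') ∈
    spanHigherWeight k b n (∑ j, dB b (x j : G))
  rcases hd.lt_or_gt with hlt | hgt
  · exact monomial_add_monomial_comp_swap_mem_span k b hx hi' hlt
  · have h := monomial_add_monomial_comp_swap_mem_span k b (x := x ∘ Equiv.swap i i')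
      (fun j => hx _) hi' (by simpa using hgt)
    rwa [Function.comp_assoc, ← Equiv.Perm.coe_mul, Equiv.swap_mul_self, Equiv.Perm.coe_one,
      Function.comp_id, add_comm, Function.comp_def,
      Equiv.sum_comp (Equiv.swap i i') fun j => dB b (x j : G)] at h
end
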